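/- Let δ ∈ ℝ with 1 < δ < 2, let N ≥ 3 be an integer, h = 1/N, let α₀ ≥ 1/(δ−1) and α₁ ≥ 0, and let b₁, …, b_{N−1} and c₁, …, c_{N−1} be real numbers with c_j ≥ 0 for all j. Define the (N+1)×(N+1) real matrix A by its action on vectors v = (v₀, …, v_N): (Av)₀ = (1 + α₀/h) v₀ − (α₀/h) v₁; (Av)_N = −(α₁/h) v_{N−1} + (1 + α₁/h) v_N; and for 1 ≤ j ≤ N−1, (Av)_j = −(1/(h^δ Γ(3−δ))) Σ_{k=0}^{j−1} d_{j−k} (v_{k+2} − 2 v_{k+1} + v_k) + b_j D^ℵ v_j + c_j v_j, where d_r := (max(r,0))^{2−δ} − (max(r−1,0))^{2−δ} and D^ℵ v_j := (v_{j+1} − v_j)/h if b_j < 0 and (v_j − v_{j−1})/h if b_j ≥ 0. Then A is invertible and every entry of A^{−1} is nonnegative. -/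

import Mathlib

/-!
It suffices to show that `A` is monotone: `A v ≥ 0` implies `v ≥ 0`. If not, let `m` be the last
index at which `v` attains its negative minimum and `w = v - v_m ≥ 0`, so `w_m = 0 < w_{m+1}`.
At `m = 0` or `m = N` the Robin row is negative. At an interior `m` the upwind and reaction terms
are `≤ 0`, and summing by parts twice turns the Caputo sum into
`∑ Δ²d · w + d_m w₀ - (2d_m - d_{m-1}) w₁`. The weights `d_r` are discretely convex because
`t ↦ t^(1-δ)` is convex, and the coefficient of `w_{m+1}` is `d_1 = 1`, so the sum is positive
once the boundary term is nonnegative. That follows from the left Robin row, which gives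
`w₁ ≤ (1 + h/α₀) w₀`, together with `α₀ ≥ 1/(δ-1)` and the increment inequality
`(m - 1 + 2δ) d_m ≤ (m + δ) d_{m-1}`.
-/

/-- The coefficients `d_r = (max(r,0))^{2−δ} − (max(r−1,0))^{2−δ}` of the standard
discretization of the Caputo derivative of order `δ ∈ (1,2)`. -/
noncomputable def dCoef (δ : ℝ) (r : ℕ) : ℝ :=
  (max (r:ℝ) 0) ^ (2 - δ) - (max ((r:ℝ) - 1) 0) ^ (2 - δ)

open MeasureTheory Finset

theorem two_mul_rpow_le_rpow_sub_one_add_rpow_add_one {p t : ℝ} (hp : p ≤ 0) (ht : 1 < t) :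
    2 * t ^ p ≤ (t - 1) ^ p + (t + 1) ^ p := by
  have hlo : 0 < (t - 1) ^ p := Real.rpow_pos_of_pos (by linarith) p
  have hhi : 0 < (t + 1) ^ p := Real.rpow_pos_of_pos (by linarith) p
  have hmid : 0 < t ^ p := Real.rpow_pos_of_pos (by linarith) p
  have hgm : t ^ p * t ^ p ≤ (t - 1) ^ p * (t + 1) ^ p := by
    rw [← Real.mul_rpow (by linarith) (by linarith), ← Real.mul_rpow (by linarith) (by linarith)]
    exact Real.rpow_le_rpow_of_nonpos (by nlinarith) (by nlinarith) hp
  nlinarith [sq_nonneg ((t - 1) ^ p - (t + 1) ^ p)]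

theorem mul_rpow_le_mul_rpow_sub_one {β t M : ℝ} (hβ₀ : 0 ≤ β) (hβ : β < 1) (ht : 1 < t)
    (htM : t ≤ M) :
    (M + 3 - 2 * β) * t ^ (β - 1) ≤ (M + 2 - β) * (t - 1) ^ (β - 1) := by
  have ht₀ : 0 < t := by linarith
  have hbern : (t - 1) ^ (1 - β) ≤ t ^ (1 - β) * (1 - (1 - β) / t) := by
    have := rpow_one_add_le_one_add_mul_self (s := -1 / t)
      (by rw [neg_div, neg_le_neg_iff, div_le_one ht₀]; linarith) (p := 1 - β) (by linarith)
      (by linarith)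
    calc (t - 1) ^ (1 - β) = (t * (1 + -1 / t)) ^ (1 - β) := by
          congr 1; field_simp; ring
      _ = t ^ (1 - β) * (1 + -1 / t) ^ (1 - β) :=
        Real.mul_rpow ht₀.le
          (by rw [neg_div, ← sub_eq_add_neg, sub_nonneg, div_le_one ht₀]; linarith)
      _ ≤ t ^ (1 - β) * (1 - (1 - β) / t) := by
        gcongr
        exact this.trans_eq (by ring)
  have hcoef : 1 - β ≤ (M + 3 - 2 * β) * ((1 - β) / t) := by
    rw [← mul_div_assoc, le_div_iff₀ ht₀]
    nlinarith
  rw [← neg_sub 1 β, Real.rpow_neg ht₀.le, Real.rpow_neg (by linarith), ← div_eq_mul_inv,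
    ← div_eq_mul_inv, div_le_div_iff₀ (Real.rpow_pos_of_pos ht₀ _)
      (Real.rpow_pos_of_pos (by linarith) _)]
  calc (M + 3 - 2 * β) * (t - 1) ^ (1 - β)
      ≤ (M + 3 - 2 * β) * (t ^ (1 - β) * (1 - (1 - β) / t)) := by gcongr; linarith
    _ ≤ (M + 2 - β) * t ^ (1 - β) := by
      rw [mul_comm (t ^ _), ← mul_assoc]
      gcongr
      linarith [mul_sub (M + 3 - 2 * β) 1 ((1 - β) / t)]

theorem integral_mul_sub_rpow {β : ℝ} (hβ : 0 < β) (a b c : ℝ) :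
    ∫ t in a..b, β * (t - c) ^ (β - 1) = (b - c) ^ β - (a - c) ^ β := by
  rw [intervalIntegral.integral_comp_sub_right (fun t => β * t ^ (β - 1)),
    intervalIntegral.integral_const_mul, integral_rpow (Or.inl (by linarith)), sub_add_cancel,
    mul_div_cancel₀ _ hβ.ne']

theorem intervalIntegrable_mul_sub_rpow {β : ℝ} (hβ : 0 < β) (a b c : ℝ) :
    IntervalIntegrable (fun t => β * (t - c) ^ (β - 1)) volume a b := by
  have h : IntervalIntegrable (fun t : ℝ => t ^ (β - 1)) volume (a - c) (b - c) :=
    intervalIntegral.intervalIntegrable_rpow' (by linarith)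
  simpa only [sub_add_cancel] using (h.comp_sub_right c).const_mul β

theorem rpow_increment_convex {β x : ℝ} (hβ₀ : 0 < β) (hβ₁ : β ≤ 1) (hx : 1 ≤ x) :
    2 * ((x + 1) ^ β - x ^ β) ≤ (x ^ β - (x - 1) ^ β) + ((x + 2) ^ β - (x + 1) ^ β) := by
  have key := intervalIntegral.integral_mono_on_of_le_Ioo (by linarith : x ≤ x + 1)
    ((intervalIntegrable_mul_sub_rpow hβ₀ x (x + 1) 0).const_mul 2)
    ((intervalIntegrable_mul_sub_rpow hβ₀ x (x + 1) 1).add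
      (intervalIntegrable_mul_sub_rpow hβ₀ x (x + 1) (-1))) fun t ht => by
    have := two_mul_rpow_le_rpow_sub_one_add_rpow_add_one (by linarith : β - 1 ≤ 0)
      (by linarith [ht.1] : 1 < t)
    simp only [sub_zero, sub_neg_eq_add]
    nlinarith
  rw [intervalIntegral.integral_const_mul, intervalIntegral.integral_add
    (intervalIntegrable_mul_sub_rpow hβ₀ x (x + 1) 1)
    (intervalIntegrable_mul_sub_rpow hβ₀ x (x + 1) (-1)), integral_mul_sub_rpow hβ₀,
    integral_mul_sub_rpow hβ₀, integral_mul_sub_rpow hβ₀] at key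
  ring_nf at key ⊢
  linarith

theorem rpow_increment_ratio {β x : ℝ} (hβ₀ : 0 < β) (hβ₁ : β < 1) (hx : 2 ≤ x) :
    (x + 3 - 2 * β) * (x ^ β - (x - 1) ^ β) ≤ (x + 2 - β) * ((x - 1) ^ β - (x - 2) ^ β) := by
  have key := intervalIntegral.integral_mono_on_of_le_Ioo (by linarith : x - 1 ≤ x)
    ((intervalIntegrable_mul_sub_rpow hβ₀ (x - 1) x 0).const_mul (x + 3 - 2 * β))
    ((intervalIntegrable_mul_sub_rpow hβ₀ (x - 1) x 1).const_mul (x + 2 - β)) fun t ht => by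
    have := mul_rpow_le_mul_rpow_sub_one hβ₀.le hβ₁ (by linarith [ht.1] : 1 < t) ht.2.le
    simp only [sub_zero]
    nlinarith
  rw [intervalIntegral.integral_const_mul (x + 3 - 2 * β),
    intervalIntegral.integral_const_mul (x + 2 - β), integral_mul_sub_rpow hβ₀,
    integral_mul_sub_rpow hβ₀] at key
  ring_nf at key ⊢
  linarith

section dCoef

variable {δ : ℝ}

theorem dCoef_zero : dCoef δ 0 = 0 := by
  simp [dCoef]

theorem dCoef_of_one_le {r : ℕ} (hr : 1 ≤ r) :
    dCoef δ r = (r : ℝ) ^ (2 - δ) - ((r : ℝ) - 1) ^ (2 - δ) := by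
  have : (1 : ℝ) ≤ r := by exact_mod_cast hr
  rw [dCoef, max_eq_left (by linarith), max_eq_left (by linarith)]

theorem dCoef_one (hδ : δ < 2) : dCoef δ 1 = 1 := by
  rw [dCoef_of_one_le le_rfl]
  norm_num [Real.zero_rpow (by linarith : 2 - δ ≠ 0)]

theorem dCoef_nonneg (hδ : δ ≤ 2) (r : ℕ) : 0 ≤ dCoef δ r := by
  rcases Nat.eq_zero_or_pos r with rfl | hr
  · rw [dCoef_zero]
  · have : (1 : ℝ) ≤ r := by exact_mod_cast hr
    rw [dCoef_of_one_le hr, sub_nonneg]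
    exact Real.rpow_le_rpow (by linarith) (by linarith) (by linarith)

theorem two_mul_dCoef_succ_le (hδ₁ : 1 ≤ δ) (hδ₂ : δ < 2) {r : ℕ} (hr : 1 ≤ r) :
    2 * dCoef δ (r + 1) ≤ dCoef δ r + dCoef δ (r + 2) := by
  have := rpow_increment_convex (by linarith : 0 < 2 - δ) (by linarith) (by exact_mod_cast hr :
    (1 : ℝ) ≤ r)
  rw [dCoef_of_one_le hr, dCoef_of_one_le (by omega), dCoef_of_one_le (by omega)]
  push_cast
  ring_nf at this ⊢
  linarith

theorem two_mul_dCoef_sub_mul_le (hδ₁ : 1 < δ) (hδ₂ : δ < 2) {j : ℕ} (hj : 2 ≤ j) :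
    (2 * dCoef δ j - dCoef δ (j - 1)) * (j + δ) ≤ (j + 1) * dCoef δ j := by
  have := rpow_increment_ratio (by linarith : 0 < 2 - δ) (by linarith) (by exact_mod_cast hj :
    (2 : ℝ) ≤ j)
  rw [dCoef_of_one_le (by omega), dCoef_of_one_le (by omega), Nat.cast_sub (by omega)] at *
  push_cast
  ring_nf at this ⊢
  linarith

end dCoef

theorem sum_range_mul_secondDiff {R : Type*} [CommRing R] (D w : ℕ → R) (n : ℕ) :
    ∑ k ∈ range n, D k * (w (k + 2) - 2 * w (k + 1) + w k)
      = ∑ k ∈ range n, (D (k + 2) - 2 * D (k + 1) + D k) * w (k + 2)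
        + (D 0 * w 0 - 2 * D 0 * w 1 + D 1 * w 1)
        - (D n * w n - 2 * D n * w (n + 1) + D (n + 1) * w (n + 1)) := by
  induction n with
  | zero => simp
  | succ n ih => rw [sum_range_succ, sum_range_succ, ih]; ring

theorem le_sum_range_mul_secondDiff {d w : ℕ → ℝ} (hd₀ : d 0 = 0) (hd₁ : d 1 = 1)
    (hconv : ∀ r, 1 ≤ r → 2 * d (r + 1) ≤ d r + d (r + 2)) {j : ℕ} (hj : 1 ≤ j)
    (hw : ∀ i ≤ j + 1, 0 ≤ w i) (hwj : w j = 0) :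
    w (j + 1) + d j * w 0 - (2 * d j - d (j - 1)) * w 1
      ≤ ∑ k ∈ range j, d (j - k) * (w (k + 2) - 2 * w (k + 1) + w k) := by
  obtain ⟨i, rfl⟩ : ∃ i, j = i + 1 := ⟨j - 1, by omega⟩
  rw [sum_range_mul_secondDiff (fun k => d (i + 1 - k)), sum_range_succ]
  simp only [Nat.sub_self, Nat.sub_zero, show i + 1 - (i + 2) = 0 by omega,
    show i + 1 - i = 1 by omega, hd₀, hd₁]
  have hrest : 0 ≤ ∑ k ∈ range i,
      (d (i + 1 - (k + 2)) - 2 * d (i + 1 - (k + 1)) + d (i + 1 - k)) * w (k + 2) := by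
    refine sum_nonneg fun k hk => ?_
    rw [mem_range] at hk
    rcases (show k + 1 = i ∨ k + 2 ≤ i by omega) with hki | hki
    · rw [show k + 2 = i + 1 by omega, hwj, mul_zero]
    · refine mul_nonneg ?_ (hw _ (by omega))
      have := hconv (i + 1 - (k + 2)) (by omega)
      rw [show i + 1 - (k + 2) + 1 = i + 1 - (k + 1) by omega,
        show i + 1 - (k + 2) + 2 = i + 1 - k by omega] at this
      linarith
  linarith

theorem sum_dCoef_mul_secondDiff_pos {δ : ℝ} (hδ₁ : 1 < δ) (hδ₂ : δ < 2) {j : ℕ} (hj : 1 ≤ j)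
    {ε : ℝ} (hε : (j + 1) * ε ≤ δ - 1) {u : ℕ → ℝ} (hmin : ∀ i ≤ j + 1, u j ≤ u i)
    (hlast : u j < u (j + 1)) (h₀₁ : u 1 - u j ≤ (1 + ε) * (u 0 - u j)) :
    0 < ∑ k ∈ range j, dCoef δ (j - k) * (u (k + 2) - 2 * u (k + 1) + u k) := by
  set w : ℕ → ℝ := fun i => u i - u j with hw
  have hsum : ∑ k ∈ range j, dCoef δ (j - k) * (u (k + 2) - 2 * u (k + 1) + u k)
      = ∑ k ∈ range j, dCoef δ (j - k) * (w (k + 2) - 2 * w (k + 1) + w k) :=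
    sum_congr rfl fun k _ => by simp only [hw]; ring
  have hbound := le_sum_range_mul_secondDiff dCoef_zero (dCoef_one hδ₂)
    (fun r => two_mul_dCoef_succ_le hδ₁.le hδ₂) hj (w := w) (fun i hi => sub_nonneg.2 (hmin i hi))
    (sub_self _)
  have hw₀ : 0 ≤ w 0 := sub_nonneg.2 (hmin 0 (by omega))
  have hw₁ : 0 ≤ w 1 := sub_nonneg.2 (hmin 1 (by omega))
  have hboundary : (2 * dCoef δ j - dCoef δ (j - 1)) * w 1 ≤ dCoef δ j * w 0 := by
    have hd := dCoef_nonneg hδ₂.le j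
    rcases le_or_gt (2 * dCoef δ j - dCoef δ (j - 1)) 0 with hc | hc
    · nlinarith
    rcases (show j = 1 ∨ 2 ≤ j by omega) with rfl | hj₂
    · rw [show w 1 = 0 from sub_self _, mul_zero]
      exact mul_nonneg hd hw₀
    have hkey := two_mul_dCoef_sub_mul_le hδ₁ hδ₂ hj₂
    have hj₀ : (0 : ℝ) < j + 1 := by positivity
    calc (2 * dCoef δ j - dCoef δ (j - 1)) * w 1
        ≤ (2 * dCoef δ j - dCoef δ (j - 1)) * ((1 + ε) * w 0) := by gcongr
      _ ≤ dCoef δ j * w 0 := by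
        rw [← mul_assoc]
        gcongr
        nlinarith
  rw [hsum]
  linarith [sub_pos.2 hlast]

theorem robin_row_neg {q x y : ℝ} (hq : 0 ≤ q) (hx : x < 0) (hxy : x ≤ y) :
    (1 + q) * x - q * y < 0 := by
  nlinarith

theorem robin_row_bound {q x y m : ℝ} (hq : 0 < q) (hm : m ≤ 0)
    (hrow : 0 ≤ (1 + q) * x - q * y) :
    y - m ≤ (1 + q⁻¹) * (x - m) := by
  rw [show (1 + q⁻¹) * (x - m) = (1 + q) * (x - m) / q by field_simp; ring, le_div_iff₀ hq]
  nlinarith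

theorem upwind_nonpos {b h xl x xr : ℝ} (hh : 0 < h) (hl : x ≤ xl) (hr : x ≤ xr) :
    b * (if b < 0 then (xr - x) / h else (x - xl) / h) ≤ 0 := by
  split_ifs with hb
  · exact mul_nonpos_of_nonpos_of_nonneg hb.le (div_nonneg (by linarith) hh.le)
  · exact mul_nonpos_of_nonneg_of_nonpos (not_lt.1 hb)
      (div_nonpos_of_nonpos_of_nonneg (by linarith) hh.le)

theorem add_one_mul_inv_div_le {δ α₀ h : ℝ} {m N : ℕ} (hδ : 1 < δ) (hα₀ : 1 / (δ - 1) ≤ α₀)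
    (hh : h = 1 / N) (hmN : m < N) : (m + 1) * (α₀ / h)⁻¹ ≤ δ - 1 := by
  have hα₀₀ : 0 < α₀ := (one_div_pos.2 (by linarith)).trans_le hα₀
  have hmN' : (m + 1 : ℝ) ≤ N := by exact_mod_cast hmN
  have hα₀' : 1 ≤ α₀ * (δ - 1) := by rwa [div_le_iff₀ (by linarith)] at hα₀
  calc (m + 1) * (α₀ / h)⁻¹ = (m + 1) / N / α₀ := by rw [inv_div, hh]; ring
    _ ≤ 1 / α₀ := by gcongr; exact div_le_one_of_le₀ hmN' (by positivity)
    _ ≤ δ - 1 := by rw [div_le_iff₀ hα₀₀]; linarith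

theorem exists_last_argmin {α : Type*} [LinearOrder α] (u : ℕ → α) (N : ℕ) :
    ∃ m ≤ N, (∀ i ≤ N, u m ≤ u i) ∧ ∀ i ≤ N, m < i → u m < u i := by
  obtain ⟨m₀, hm₀, hmin₀⟩ := (range (N + 1)).exists_min_image u nonempty_range_add_one
  set S := (range (N + 1)).filter fun i => ∀ k ≤ N, u i ≤ u k
  have hS : S.Nonempty := ⟨m₀, mem_filter.2 ⟨hm₀, fun k hk => hmin₀ k (mem_range.2 (by omega))⟩⟩
  obtain ⟨m, hmS, hmax⟩ := S.exists_max_image id hS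
  obtain ⟨hmN, hmin⟩ := mem_filter.1 hmS
  refine ⟨m, by simpa [Nat.lt_succ_iff] using hmN, hmin, fun i hi hmi => ?_⟩
  refine (hmin i hi).lt_of_ne fun heq => (hmi.not_ge (hmax i ?_))
  exact mem_filter.2 ⟨mem_range.2 (by omega), fun k hk => heq ▸ hmin k hk⟩

open Matrix in
theorem Matrix.isUnit_det_and_inv_nonneg_of_mulVec_nonneg {n K : Type*} [Fintype n]
    [DecidableEq n] [Field K] [LinearOrder K] [IsStrictOrderedRing K] (A : Matrix n n K)
    (hA : ∀ v, 0 ≤ A *ᵥ v → 0 ≤ v) : IsUnit A.det ∧ ∀ i j, 0 ≤ A⁻¹ i j := by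
  have hdet : IsUnit A.det := by
    refine isUnit_iff_ne_zero.2 fun h0 => ?_
    obtain ⟨v, hv, hAv⟩ := Matrix.exists_mulVec_eq_zero_iff.2 h0
    refine hv (le_antisymm ?_ (hA v hAv.ge))
    simpa using hA (-v) (by rw [Matrix.mulVec_neg, hAv, neg_zero])
  refine ⟨hdet, fun i j => ?_⟩
  have hcol : A *ᵥ (A⁻¹ *ᵥ Pi.single j 1) = Pi.single j 1 := by
    rw [Matrix.mulVec_mulVec, Matrix.mul_nonsing_inv A hdet, Matrix.one_mulVec]
  have := hA _ (hcol ▸ Pi.single_nonneg.2 zero_le_one) i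
  simpa [Matrix.mulVec_single_one] using this

theorem stmt15 (δ : ℝ) (hδ1 : 1 < δ) (hδ2 : δ < 2)
    (N : ℕ) (hN : 3 ≤ N) (h : ℝ) (hh : h = 1 / N)
    (α₀ α₁ : ℝ) (hα₀ : 1 / (δ - 1) ≤ α₀) (hα₁ : 0 ≤ α₁)
    (b c : ℕ → ℝ) (hc : ∀ j : ℕ, 1 ≤ j → j ≤ N - 1 → 0 ≤ c j)
    (A : Matrix (Fin (N + 1)) (Fin (N + 1)) ℝ)
    (hA0 : ∀ v : Fin (N + 1) → ℝ,
      A.mulVec v ⟨0, by omega⟩ = (1 + α₀ / h) * v ⟨0, by omega⟩ - (α₀ / h) * v ⟨1, by omega⟩)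
    (hAN : ∀ v : Fin (N + 1) → ℝ,
      A.mulVec v ⟨N, by omega⟩
        = -(α₁ / h) * v ⟨N - 1, by omega⟩ + (1 + α₁ / h) * v ⟨N, by omega⟩)
    (hAj : ∀ v : Fin (N + 1) → ℝ, ∀ j : ℕ, ∀ _hj1 : 1 ≤ j, ∀ hj2 : j ≤ N - 1,
      A.mulVec v ⟨j, by omega⟩
        = -(1 / (h ^ δ * Real.Gamma (3 - δ))) *
            (∑ k : Fin j, dCoef δ (j - (k:ℕ)) *
              (v ⟨(k:ℕ) + 2, by have := k.isLt; omega⟩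
                - 2 * v ⟨(k:ℕ) + 1, by have := k.isLt; omega⟩
                + v ⟨(k:ℕ), by have := k.isLt; omega⟩))
          + b j * (if b j < 0 then (v ⟨j + 1, by omega⟩ - v ⟨j, by omega⟩) / h
              else (v ⟨j, by omega⟩ - v ⟨j - 1, by omega⟩) / h)
          + c j * v ⟨j, by omega⟩) :
    IsUnit A.det ∧ ∀ i j : Fin (N + 1), 0 ≤ A⁻¹ i j := by
  have hh₀ : 0 < h := by rw [hh]; positivity
  have hα₀₀ : 0 < α₀ := (one_div_pos.2 (by linarith)).trans_le hα₀
  have hμ : 0 < 1 / (h ^ δ * Real.Gamma (3 - δ)) := by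
    have := Real.Gamma_pos_of_pos (by linarith : 0 < 3 - δ)
    positivity
  refine A.isUnit_det_and_inv_nonneg_of_mulVec_nonneg fun v hv => ?_
  set u : ℕ → ℝ := fun i => if hi : i < N + 1 then v ⟨i, hi⟩ else 0
  have hvu : ∀ i (hi : i < N + 1), v ⟨i, hi⟩ = u i := fun i hi => by simp only [u, dif_pos hi]
  obtain ⟨m, hmN, hmin, hlast⟩ := exists_last_argmin u N
  suffices 0 ≤ u m from fun i => by
    rw [← Fin.eta i i.2, hvu]; exact this.trans (hmin i (by omega))
  by_contra! hneg
  have row₀ := hv ⟨0, by omega⟩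
  rw [Pi.zero_apply, hA0, hvu, hvu] at row₀
  rcases Nat.eq_zero_or_pos m with rfl | hm₁
  · exact (robin_row_neg (by positivity) hneg (hmin 1 (by omega))).not_ge row₀
  rcases eq_or_lt_of_le hmN with rfl | hmN'
  · have rowN := hv ⟨m, by omega⟩
    rw [Pi.zero_apply, hAN, hvu, hvu] at rowN
    exact (robin_row_neg (q := α₁ / h) (by positivity) hneg (hmin (m - 1) (by omega))).not_ge
      (by linarith)
  have rowm := hv ⟨m, by omega⟩
  rw [Pi.zero_apply, hAj v m hm₁ (by omega)] at rowm
  simp only [hvu, Fin.sum_univ_eq_sum_range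
    (fun k => dCoef δ (m - k) * (u (k + 2) - 2 * u (k + 1) + u k))] at rowm
  have hS := sum_dCoef_mul_secondDiff_pos hδ1 hδ2 hm₁ (add_one_mul_inv_div_le hδ1 hα₀ hh hmN')
    (fun i hi => hmin i (by omega)) (hlast _ (by omega) (by omega))
    (robin_row_bound (by positivity) hneg.le row₀)
  have hup := upwind_nonpos (b := b m) hh₀ (hmin (m - 1) (by omega)) (hmin (m + 1) (by omega))
  have hreact := mul_nonpos_of_nonneg_of_nonpos (hc m hm₁ (by omega)) hneg.le
  nlinarith [mul_pos hμ hS]
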